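/- Let 0 < ε < 1. Then there exists L₀ > 0 such that for all positive reals x, y, z with min{x, y, z} > L₀ and all (x', y', z') ∈ B_ε(x, y, z), one has |log(sinh(F₁(x, y, z))) − log(sinh(F₁(x', y', z')))| ≤ 5·ε·max{x, y, z}. -/

import Mathlib

open Real

/-- Inverse hyperbolic cosine: `Arccosh w = log (w + √(w² − 1))` for `w ≥ 1`. -/
noncomputable def arccosh (w : ℝ) : ℝ := Real.log (w + Real.sqrt (w ^ 2 - 1))

/-- The function `F₁(x,y,z) = Arccosh((cosh z + cosh x · cosh y)/(sinh x · sinh y))`. -/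
noncomputable def F₁ (x y z : ℝ) : ℝ :=
  arccosh ((Real.cosh z + Real.cosh x * Real.cosh y) / (Real.sinh x * Real.sinh y))

/-- `(x',y',z') ∈ B_ε(x,y,z)`: each ratio is within a factor `1 + ε`. -/
def memB (ε x y z x' y' z' : ℝ) : Prop :=
  (1 / (1 + ε) < x / x' ∧ x / x' < 1 + ε) ∧
  (1 / (1 + ε) < y / y' ∧ y / y' < 1 + ε) ∧
  (1 / (1 + ε) < z / z' ∧ z / z' < 1 + ε)


/-!
Since `sinh (arcosh w) = √(w² - 1)` and
`w² - 1 = (cosh z + cosh (x - y)) (cosh z + cosh (x + y)) / (sinh x sinh y)²`,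
`log (sinh (F₁ x y z))` is a combination of `log (sinh x)`, `log (sinh y)` and
`log (cosh z + cosh u)` with `u = x ∓ y`. For `x, y ≥ 1` and `z ≥ 0` these are within `log 4`,
resp. `log 2`, of their tropical limits `x`, `y`, `max z |u|`, so `log ∘ sinh ∘ F₁` is within
`5 log 2` of the piecewise linear `tropLogSinhF₁`. On `B_ε(x, y, z)` each coordinate moves by
less than `ε M` with `M = max (max x y) z`, so `tropLogSinhF₁` moves by at most `4 ε M`; once
`ε M > 8 > 10 log 2` the two approximation errors fit into the remaining `ε M`.
-/
lemma log_sinh_F₁ {x y : ℝ} (hx : 0 < x) (hy : 0 < y) (z : ℝ) :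
    log (sinh (F₁ x y z)) =
      (log (cosh z + cosh (x - y)) + log (cosh z + cosh (x + y))) / 2
        - log (sinh x) - log (sinh y) := by
  have hsx : 0 < sinh x := sinh_pos_iff.2 hx
  have hsy : 0 < sinh y := sinh_pos_iff.2 hy
  have hA : 0 < cosh z + cosh (x - y) := by positivity
  have hB : 0 < cosh z + cosh (x + y) := by positivity
  set w := (cosh z + cosh x * cosh y) / (sinh x * sinh y)
  have hw : 1 ≤ w := by
    rw [le_div_iff₀ (by positivity), one_mul]
    linarith [cosh_sub x y]
  have hw_sq : w ^ 2 - 1 =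
      (cosh z + cosh (x - y)) * (cosh z + cosh (x + y)) / (sinh x * sinh y) ^ 2 := by
    simp only [w]
    field_simp
    rw [cosh_sub, cosh_add]
    ring
  rw [F₁, arccosh, ← arcosh, sinh_arcosh hw, hw_sq, sqrt_div (by positivity), sqrt_mul hA.le,
    sqrt_sq (by positivity), log_div (by positivity) (by positivity), log_mul (by positivity)
    (by positivity), log_sqrt hA.le, log_sqrt hB.le, log_mul hsx.ne' hsy.ne']
  ring

lemma abs_log_sub_le_log_of_le_of_le {a b c : ℝ} (hc : 0 < c) (hlow : exp a / c ≤ b)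
    (hup : b ≤ c * exp a) : |log b - a| ≤ log c := by
  have hb : 0 < b := lt_of_lt_of_le (by positivity) hlow
  have h₁ := log_le_log (by positivity) hlow
  have h₂ := log_le_log hb hup
  rw [log_div (exp_pos a).ne' hc.ne', log_exp] at h₁
  rw [log_mul hc.ne' (exp_pos a).ne', log_exp] at h₂
  rw [abs_le]
  constructor <;> linarith

lemma cosh_le_exp_abs (x : ℝ) : cosh x ≤ exp |x| := by
  rw [← cosh_abs, cosh_eq]
  linarith [exp_le_exp.2 (neg_le_self (abs_nonneg x))]

lemma exp_abs_div_two_le_cosh (x : ℝ) : exp |x| / 2 ≤ cosh x := by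
  rw [← cosh_abs, cosh_eq]
  linarith [exp_pos (-|x|)]

lemma abs_log_sinh_sub_le {t : ℝ} (ht : 1 ≤ t) : |log (sinh t) - t| ≤ log 4 := by
  apply abs_log_sub_le_log_of_le_of_le (by norm_num)
  · have h : 2 * exp (-t) < exp t := by
      have := exp_le_exp.2 (neg_le_neg ht)
      linarith [exp_neg_one_lt_half, add_one_le_exp t]
    rw [sinh_eq]
    linarith
  · rw [sinh_eq]
    linarith [exp_pos t, exp_pos (-t)]

lemma abs_log_cosh_add_cosh_sub_le {z : ℝ} (hz : 0 ≤ z) (u : ℝ) :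
    |log (cosh z + cosh u) - max z (|u|)| ≤ log 2 := by
  apply abs_log_sub_le_log_of_le_of_le two_pos
  · rcases max_cases z |u| with ⟨hm, -⟩ | ⟨hm, -⟩ <;> rw [hm]
    · linarith [abs_of_nonneg hz ▸ exp_abs_div_two_le_cosh z, cosh_pos u]
    · linarith [exp_abs_div_two_le_cosh u, cosh_pos z]
  · have hz' : cosh z ≤ exp (max z |u|) :=
      (cosh_le_exp_abs z).trans (exp_le_exp.2 ((abs_of_nonneg hz).le.trans (le_max_left _ _)))
    have hu' : cosh u ≤ exp (max z |u|) :=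
      (cosh_le_exp_abs u).trans (exp_le_exp.2 (le_max_right _ _))
    linarith

noncomputable def tropLogSinhF₁ (x y z : ℝ) : ℝ :=
  (max z |x - y| + max z (x + y)) / 2 - x - y

lemma abs_log_sinh_F₁_sub_tropLogSinhF₁_le {x y z : ℝ} (hx : 1 ≤ x) (hy : 1 ≤ y) (hz : 0 ≤ z) :
    |log (sinh (F₁ x y z)) - tropLogSinhF₁ x y z| ≤ 5 * log 2 := by
  have hA := abs_le.1 (abs_log_cosh_add_cosh_sub_le hz (x - y))
  have hB := abs_le.1 (abs_log_cosh_add_cosh_sub_le hz (x + y))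
  have hX := abs_le.1 (abs_log_sinh_sub_le hx)
  have hY := abs_le.1 (abs_log_sinh_sub_le hy)
  have h4 : log 4 = 2 * log 2 := by
    rw [show (4 : ℝ) = 2 ^ 2 by norm_num, log_pow, Nat.cast_ofNat]
  rw [abs_of_nonneg (by linarith : 0 ≤ x + y)] at hB
  rw [log_sinh_F₁ (by linarith) (by linarith), tropLogSinhF₁, abs_le]
  constructor <;> linarith

lemma abs_tropLogSinhF₁_sub_tropLogSinhF₁_le (x y z x' y' z' : ℝ) :
    |tropLogSinhF₁ x y z - tropLogSinhF₁ x' y' z'| ≤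
      max |z - z'| (|x - x'| + |y - y'|) + (|x - x'| + |y - y'|) := by
  have hsub : |(x - y) - (x' - y')| ≤ |x - x'| + |y - y'| := by
    rw [sub_sub_sub_comm]
    exact abs_sub _ _
  have hadd : |(x + y) - (x' + y')| ≤ |x - x'| + |y - y'| := by
    rw [add_sub_add_comm]
    exact abs_add_le _ _
  have h₁ : |max z (|x - y|) - max z' (|x' - y'|)| ≤ max |z - z'| (|x - x'| + |y - y'|) :=
    (abs_max_sub_max_le_max _ _ _ _).trans
      (max_le_max le_rfl ((abs_abs_sub_abs_le_abs_sub _ _).trans hsub))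
  have h₂ : |max z (x + y) - max z' (x' + y')| ≤ max |z - z'| (|x - x'| + |y - y'|) :=
    (abs_max_sub_max_le_max _ _ _ _).trans (max_le_max le_rfl hadd)
  rw [abs_le] at h₁ h₂ ⊢
  constructor <;> unfold tropLogSinhF₁ <;>
    linarith [neg_abs_le (x - x'), le_abs_self (x - x'), neg_abs_le (y - y'), le_abs_self (y - y')]

lemma abs_log_sinh_F₁_sub_log_sinh_F₁_le {x y z x' y' z' : ℝ} (hx : 1 ≤ x) (hy : 1 ≤ y)
    (hz : 0 ≤ z) (hx' : 1 ≤ x') (hy' : 1 ≤ y') (hz' : 0 ≤ z') :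
    |log (sinh (F₁ x y z)) - log (sinh (F₁ x' y' z'))| ≤
      max |z - z'| (|x - x'| + |y - y'|) + (|x - x'| + |y - y'|) + 10 * log 2 := by
  have h := abs_le.1 (abs_log_sinh_F₁_sub_tropLogSinhF₁_le hx hy hz)
  have h' := abs_le.1 (abs_log_sinh_F₁_sub_tropLogSinhF₁_le hx' hy' hz')
  have htrop := abs_le.1 (abs_tropLogSinhF₁_sub_tropLogSinhF₁_le x y z x' y' z')
  rw [abs_le]
  constructor <;> linarith

lemma abs_sub_lt_mul_of_div_mem {ε a a' : ℝ} (hε : 0 ≤ ε) (ha' : 0 < a')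
    (hlow : 1 / (1 + ε) < a / a') (hup : a / a' < 1 + ε) : |a - a'| < ε * a := by
  rw [div_lt_div_iff₀ (by positivity) ha', one_mul] at hlow
  rw [div_lt_iff₀ ha'] at hup
  rw [abs_lt]
  constructor <;> nlinarith

lemma one_lt_of_div_lt {ε a a' : ℝ} (hε : 0 ≤ ε) (ha : 1 + ε ≤ a) (ha' : 0 < a')
    (h : a / a' < 1 + ε) : 1 < a' := by
  rw [div_lt_iff₀ ha'] at h
  nlinarith

theorem stmt_5 (ε : ℝ) (hε0 : 0 < ε) :
    ∃ L₀ > (0 : ℝ), ∀ x y z x' y' z' : ℝ,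
      0 < x → 0 < y → 0 < z → 0 < x' → 0 < y' → 0 < z' →
      min (min x y) z > L₀ →
      memB ε x y z x' y' z' →
      |Real.log (Real.sinh (F₁ x y z)) - Real.log (Real.sinh (F₁ x' y' z'))|
        ≤ 5 * ε * max (max x y) z := by
  refine ⟨1 + ε + 8 / ε, by positivity, ?_⟩
  intro x y z x' y' z' _ _ _ hx' hy' hz' hmin ⟨⟨hx₁, hx₂⟩, ⟨hy₁, hy₂⟩, ⟨hz₁, hz₂⟩⟩
  obtain ⟨⟨hxL, hyL⟩, hzL⟩ : (1 + ε + 8 / ε < x ∧ 1 + ε + 8 / ε < y) ∧ 1 + ε + 8 / ε < z := by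
    simpa only [gt_iff_lt, lt_min_iff] using hmin
  have h8ε : 0 < 8 / ε := by positivity
  set M := max (max x y) z
  have hxM : ε * x ≤ ε * M := by gcongr; exact (le_max_left x y).trans (le_max_left _ _)
  have hyM : ε * y ≤ ε * M := by gcongr; exact (le_max_right x y).trans (le_max_left _ _)
  have hzM : ε * z ≤ ε * M := by gcongr; exact le_max_right _ _
  have hεM : 8 < ε * M := by
    have : ε * (8 / ε) = 8 := mul_div_cancel₀ 8 hε0.ne'
    have : ε * (8 / ε) < ε * x := by gcongr; linarith
    linarith
  have hdx := abs_sub_lt_mul_of_div_mem hε0.le hx' hx₁ hx₂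
  have hdy := abs_sub_lt_mul_of_div_mem hε0.le hy' hy₁ hy₂
  have hdz := abs_sub_lt_mul_of_div_mem hε0.le hz' hz₁ hz₂
  have hmax : max |z - z'| (|x - x'| + |y - y'|) ≤ 2 * (ε * M) :=
    max_le (by linarith) (by linarith)
  have hlip := abs_log_sinh_F₁_sub_log_sinh_F₁_le (x := x) (y := y) (z := z)
    (by linarith) (by linarith) (by linarith)
    (one_lt_of_div_lt hε0.le (by linarith) hx' hx₂).le
    (one_lt_of_div_lt hε0.le (by linarith) hy' hy₂).le hz'.le
  linarith [log_two_lt_d9]
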